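/- arXiv:2507.00897 — 5 statements merged into one kernel-verified Lean document; each statement's English description precedes it below -/
import Mathlib

section
/- For every p ∈ ℕ with p ≥ 1 and every n ∈ ℕ, if θ = (θ_j)_{j≥0} satisfies ∑_{j≥0} |θ_j| e^{-α_{j+1}/(2p)} < ∞, then ∑_{j≥n} |θ_{j-n}| e^{-α_j/p} ≤ e^{-α_n/(2p)} · ∑_{j≥1} |θ_{j-1}| e^{-α_j/(2p)}, where (α_n) is a nonnegative increasing sequence. -/
/-!
Split `e^{-α_{j+n}/p}` as `e^{-α_{j+n}/(2p)} · e^{-α_{j+n}/(2p)}`; since `α` is increasing and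
`n ≥ 1`, the first factor is at most `e^{-α_n/(2p)}` and the second at most `e^{-α_{j+1}/(2p)}`.
Summing this termwise bound gives the estimate.
-/

open Real

lemma exp_neg_div_le_mul_exp_neg_div_two_mul {a b c d : ℝ} (hac : a ≤ c) (hbc : b ≤ c)
    (hd : 0 ≤ d) : exp (-c / d) ≤ exp (-a / (2 * d)) * exp (-b / (2 * d)) := by
  have hhalves : -c / d = -c / (2 * d) + -c / (2 * d) := by
    rw [← add_div, ← two_mul, mul_div_mul_left _ _ two_ne_zero]
  rw [← exp_add, exp_le_exp, hhalves]
  gcongr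

lemma Monotone.exp_neg_shift_le {α : ℕ → ℝ} (hmono : Monotone α) {n : ℕ} (hn : 1 ≤ n)
    {d : ℝ} (hd : 0 ≤ d) (j : ℕ) :
    exp (-α (j + n) / d) ≤ exp (-α n / (2 * d)) * exp (-α (j + 1) / (2 * d)) :=
  exp_neg_div_le_mul_exp_neg_div_two_mul (hmono (Nat.le_add_left n j)) (hmono (by omega)) hd

theorem stmt_0_general (α : ℕ → ℝ) (hmono : Monotone α)
    (p : ℕ) (n : ℕ) (hn : 1 ≤ n) (θ : ℕ → ℂ)
    (hsum : Summable fun j : ℕ => ‖θ j‖ * Real.exp (-(α (j + 1)) / (2 * (p : ℝ)))) :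
    ∑' j : ℕ, ‖θ j‖ * Real.exp (-(α (j + n)) / (p : ℝ))
      ≤ Real.exp (-(α n) / (2 * (p : ℝ)))
        * ∑' j : ℕ, ‖θ j‖ * Real.exp (-(α (j + 1)) / (2 * (p : ℝ))) := by
  have hterm : ∀ j, ‖θ j‖ * exp (-α (j + n) / p)
      ≤ exp (-α n / (2 * p)) * (‖θ j‖ * exp (-α (j + 1) / (2 * p))) := fun j => by
    rw [mul_left_comm]
    exact mul_le_mul_of_nonneg_left (hmono.exp_neg_shift_le hn p.cast_nonneg j) (norm_nonneg _)
  have hdom := hsum.mul_left (exp (-α n / (2 * p)))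
  rw [← tsum_mul_left]
  exact (hdom.of_nonneg_of_le (fun j => by positivity) hterm).tsum_le_tsum hterm hdom

/-- Key estimate for continuity of the convolution operator on Λ₁(α):
for p ≥ 1 and any n, ∑_{j≥n} |θ_{j-n}| e^{-α_j/p} ≤ e^{-α_n/(2p)} · ∑_{j≥1} |θ_{j-1}| e^{-α_j/(2p)}. -/
theorem stmt_0 (α : ℕ → ℝ) (hmono : Monotone α) (hnonneg : ∀ n, 0 ≤ α n)
    (p : ℕ) (hp : 1 ≤ p) (n : ℕ) (hn : 1 ≤ n) (θ : ℕ → ℂ)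
    (hsum : Summable fun j : ℕ => ‖θ j‖ * Real.exp (-(α (j + 1)) / (2 * (p : ℝ)))) :
    ∑' j : ℕ, ‖θ j‖ * Real.exp (-(α (j + n)) / (p : ℝ))
      ≤ Real.exp (-(α n) / (2 * (p : ℝ)))
        * ∑' j : ℕ, ‖θ j‖ * Real.exp (-(α (j + 1)) / (2 * (p : ℝ))) :=
  stmt_0_general α hmono p n hn θ hsum
end

section
/- Let (α_n) be nonnegative increasing with ∑_n e^{-m₁ α_n} converging for some m₁ ∈ ℕ. If β = (β_j)_{j≥0} and ψ = (ψ_j)_{j≥0} satisfy |β_{n-1}| ≤ C₁ e^{m₂ α_n} and |ψ_{n-1}| ≤ C₂ e^{m₃ α_n} for all n (with constants C₁,C₂ > 0 and m₂,m₃ ∈ ℕ), then there is a constant C > 0 such that the convolution satisfies |(β*ψ)_{n-1}| ≤ C e^{(m₁+m₂+m₃) α_n} for all n ∈ ℕ, where (β*ψ)_m = ∑_{i=0}^m β_i ψ_{m-i}. -/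
/-!
Each of the `n` terms of `(β * ψ)_{n-1}` is bounded by `C₁ C₂ e^{(m₂ + m₃) α_n}`, because `α` is
increasing. The number of terms is absorbed by `e^{m₁ α_n}`: since `k ↦ e^{-m₁ α_{k+1}}` is
decreasing, `n e^{-m₁ α_n}` is at most its sum `S`, so `n ≤ S e^{m₁ α_n}`.
-/

open Finset Real

lemma le_of_le_pred_of_monotone {u f : ℕ → ℝ} (hf : Monotone f)
    (hu : ∀ n, 1 ≤ n → u (n - 1) ≤ f n) {i n : ℕ} (hi : i < n) : u i ≤ f n := by
  simpa using (hu (i + 1) (by omega)).trans (hf hi)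

lemma monotone_const_mul_exp_const_mul {α : ℕ → ℝ} (hα : Monotone α) {C : ℝ} (hC : 0 ≤ C)
    (m : ℕ) : Monotone fun n => C * exp (m * α n) :=
  (exp_monotone.comp (hα.const_mul m.cast_nonneg)).const_mul hC

lemma norm_sum_range_mul_sub_le {R : Type*} [SeminormedRing R] (β ψ : ℕ → R) {a b : ℝ}
    (N : ℕ) (hβ : ∀ i ≤ N, ‖β i‖ ≤ a) (hψ : ∀ i ≤ N, ‖ψ i‖ ≤ b) :
    ‖∑ i ∈ range (N + 1), β i * ψ (N - i)‖ ≤ (N + 1) * (a * b) := by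
  have ha : 0 ≤ a := (norm_nonneg _).trans (hβ 0 N.zero_le)
  have hterm : ∀ i ∈ range (N + 1), ‖β i * ψ (N - i)‖ ≤ a * b := fun i hi =>
    (norm_mul_le _ _).trans <| mul_le_mul (hβ i (mem_range_succ_iff.mp hi))
      (hψ _ (N.sub_le i)) (norm_nonneg _) ha
  calc ‖∑ i ∈ range (N + 1), β i * ψ (N - i)‖
      ≤ ∑ i ∈ range (N + 1), ‖β i * ψ (N - i)‖ := norm_sum_le _ _
    _ ≤ (range (N + 1)).card • (a * b) := sum_le_card_nsmul _ _ _ hterm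
    _ = (N + 1) * (a * b) := by simp

lemma Antitone.succ_mul_le_tsum {g : ℕ → ℝ} (hg : Antitone g) (hg₀ : ∀ k, 0 ≤ g k)
    (hsum : Summable g) (n : ℕ) : (n + 1) * g n ≤ ∑' k, g k :=
  calc (n + 1) * g n = (range (n + 1)).card • g n := by simp
    _ ≤ ∑ k ∈ range (n + 1), g k :=
        card_nsmul_le_sum _ _ _ fun k hk => hg (mem_range_succ_iff.mp hk)
    _ ≤ ∑' k, g k := hsum.sum_le_tsum _ fun k _ => hg₀ k

lemma succ_le_tsum_mul_exp {α : ℕ → ℝ} (hα : Monotone α) (m : ℕ)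
    (hsum : Summable fun k => exp (-(m : ℝ) * α (k + 1))) (n : ℕ) :
    (n + 1 : ℝ) ≤ (∑' k, exp (-(m : ℝ) * α (k + 1))) * exp (m * α (n + 1)) := by
  have hg : Antitone fun k => exp (-(m : ℝ) * α (k + 1)) := fun i j hij =>
    exp_le_exp.mpr <| by nlinarith [hα (Nat.succ_le_succ hij), m.cast_nonneg (α := ℝ)]
  have h := hg.succ_mul_le_tsum (fun k => (exp_pos _).le) hsum n
  rwa [neg_mul, exp_neg, ← div_eq_mul_inv, div_le_iff₀ (exp_pos _)] at h

theorem stmt_5_general (α : ℕ → ℝ) (hmono : Monotone α)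
    (m₁ : ℕ) (hsum : Summable fun n : ℕ => Real.exp (-(m₁ : ℝ) * α (n + 1)))
    (β ψ : ℕ → ℂ) (C₁ C₂ : ℝ) (hC₁ : 0 < C₁) (hC₂ : 0 < C₂) (m₂ m₃ : ℕ)
    (hβ : ∀ n : ℕ, 1 ≤ n → ‖β (n - 1)‖ ≤ C₁ * Real.exp ((m₂ : ℝ) * α n))
    (hψ : ∀ n : ℕ, 1 ≤ n → ‖ψ (n - 1)‖ ≤ C₂ * Real.exp ((m₃ : ℝ) * α n)) :
    ∃ C : ℝ, 0 < C ∧ ∀ n : ℕ, 1 ≤ n →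
      ‖∑ i ∈ Finset.range ((n - 1) + 1), β i * ψ ((n - 1) - i)‖
        ≤ C * Real.exp (((m₁ : ℝ) + (m₂ : ℝ) + (m₃ : ℝ)) * α n) := by
  set S := ∑' k, exp (-(m₁ : ℝ) * α (k + 1))
  have hS : 0 < S := hsum.tsum_pos (fun _ => (exp_pos _).le) 0 (exp_pos _)
  refine ⟨C₁ * C₂ * S, by positivity, fun n hn => ?_⟩
  obtain ⟨N, rfl⟩ : ∃ N, n = N + 1 := ⟨n - 1, by omega⟩
  have hβN : ∀ i ≤ N, ‖β i‖ ≤ C₁ * exp (m₂ * α (N + 1)) := fun i hi =>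
    le_of_le_pred_of_monotone (u := (‖β ·‖))
      (monotone_const_mul_exp_const_mul hmono hC₁.le m₂) hβ (Nat.lt_succ_of_le hi)
  have hψN : ∀ i ≤ N, ‖ψ i‖ ≤ C₂ * exp (m₃ * α (N + 1)) := fun i hi =>
    le_of_le_pred_of_monotone (u := (‖ψ ·‖))
      (monotone_const_mul_exp_const_mul hmono hC₂.le m₃) hψ (Nat.lt_succ_of_le hi)
  rw [Nat.add_sub_cancel]
  calc _ ≤ _ := norm_sum_range_mul_sub_le β ψ N hβN hψN
    _ ≤ S * exp (m₁ * α (N + 1)) *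
          (C₁ * exp (m₂ * α (N + 1)) * (C₂ * exp (m₃ * α (N + 1)))) := by
        gcongr
        exact succ_le_tsum_mul_exp hmono m₁ hsum N
    _ = _ := by simp only [add_mul, exp_add]; ring

/-- The dual (Λ_∞(α))' is closed under convolution: if |β_{n-1}| ≤ C₁ e^{m₂ α_n} and
|ψ_{n-1}| ≤ C₂ e^{m₃ α_n}, then |(β*ψ)_{n-1}| ≤ C e^{(m₁+m₂+m₃) α_n}. -/
theorem stmt_5 (α : ℕ → ℝ) (hmono : Monotone α) (hnonneg : ∀ n, 0 ≤ α n)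
    (m₁ : ℕ) (hsum : Summable fun n : ℕ => Real.exp (-(m₁ : ℝ) * α (n + 1)))
    (β ψ : ℕ → ℂ) (C₁ C₂ : ℝ) (hC₁ : 0 < C₁) (hC₂ : 0 < C₂) (m₂ m₃ : ℕ)
    (hβ : ∀ n : ℕ, 1 ≤ n → ‖β (n - 1)‖ ≤ C₁ * Real.exp ((m₂ : ℝ) * α n))
    (hψ : ∀ n : ℕ, 1 ≤ n → ‖ψ (n - 1)‖ ≤ C₂ * Real.exp ((m₃ : ℝ) * α n)) :
    ∃ C : ℝ, 0 < C ∧ ∀ n : ℕ, 1 ≤ n →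
      ‖∑ i ∈ Finset.range ((n - 1) + 1), β i * ψ ((n - 1) - i)‖
        ≤ C * Real.exp (((m₁ : ℝ) + (m₂ : ℝ) + (m₃ : ℝ)) * α n) :=
  stmt_5_general α hmono m₁ hsum β ψ C₁ C₂ hC₁ hC₂ m₂ m₃ hβ hψ
end

section
/- Let (α_n) be a nonnegative increasing sequence with α_n → ∞ and θ ∈ Λ_1(α). The convolution operator T̂_θ : Λ_1(α) → Λ_1(α) is power bounded if and only if sup_{p∈ℕ} ‖θ‖_p ≤ 1, where ‖θ‖_p = ∑_{n≥1} |θ_{n-1}| e^{-α_n/p}. -/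
open Filter Topology

/-- Convolution of two sequences: (a*b)_m = ∑_{i=0}^m a_i b_{m-i}. -/
noncomputable def conv (a b : ℕ → ℂ) : ℕ → ℂ :=
  fun m => ∑ i ∈ Finset.range (m + 1), a i * b (m - i)

/-- The p-th seminorm of Λ₁(α): ‖x‖_p = ∑_{n≥1} |x_{n-1}| e^{-α_n/p}. -/
noncomputable def lamOneNorm (α : ℕ → ℝ) (p : ℕ) (x : ℕ → ℂ) : ℝ :=
  ∑' n : ℕ, ‖x n‖ * Real.exp (-(α (n + 1)) / (p : ℝ))

/-- The convolution operator T̂_θ, acting on coordinate sequences: T̂_θ x = θ * x. -/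
noncomputable def That (θ : ℕ → ℂ) : (ℕ → ℂ) → (ℕ → ℂ) := fun x => conv θ x

/-!
Testing power boundedness on `e₀` gives `‖θ‖_p = ‖T̂_θ e₀‖_p ≤ ‖e₀‖_q = e^{-α₁/q} ≤ 1`.
Conversely, monotonicity of `α` gives `e^{-α_{m+1}/p} ≤ e^{-α_{i+1}/2p} e^{-α_{m-i+1}/2p}` for
`i ≤ m`, hence the Young-type inequality `‖a * b‖_p ≤ ‖a‖_{2p} ‖b‖_{2p}`. By induction every
convolution power `θ^{*k}` then has all seminorms `≤ 1`, and `T̂_θ^k x = θ^{*k} * x` yields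
`‖T̂_θ^k x‖_p ≤ ‖x‖_{2p}`.
-/

section Convolution

open PowerSeries

lemma PowerSeries.mk_injective {R : Type*} [Semiring R] :
    Function.Injective (mk : (ℕ → R) → R⟦X⟧) :=
  fun a b h => funext fun n => by simpa using congrArg (coeff n) h

lemma mk_conv (a b : ℕ → ℂ) : mk (conv a b) = mk a * mk b := by
  ext n
  rw [coeff_mul, Finset.Nat.sum_antidiagonal_eq_sum_range_succ_mk]
  simp [conv]

lemma conv_assoc (a b c : ℕ → ℂ) : conv (conv a b) c = conv a (conv b c) :=
  PowerSeries.mk_injective (by simp only [mk_conv, mul_assoc])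

lemma mk_single_zero_one : mk (Pi.single 0 1 : ℕ → ℂ) = 1 := by
  ext n
  rcases eq_or_ne n 0 with rfl | hn <;> simp [coeff_one, *]

lemma conv_single_zero_one (a : ℕ → ℂ) : conv a (Pi.single 0 1) = a :=
  PowerSeries.mk_injective (by rw [mk_conv, mk_single_zero_one, mul_one])

lemma single_zero_one_conv (a : ℕ → ℂ) : conv (Pi.single 0 1) a = a :=
  PowerSeries.mk_injective (by rw [mk_conv, mk_single_zero_one, one_mul])

end Convolution

noncomputable def lamOneTerm (α : ℕ → ℝ) (p : ℕ) (x : ℕ → ℂ) (n : ℕ) : ℝ :=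
  ‖x n‖ * Real.exp (-(α (n + 1)) / (p : ℝ))

def MemLamOne (α : ℕ → ℝ) (x : ℕ → ℂ) : Prop :=
  ∀ p : ℕ, 1 ≤ p → Summable (lamOneTerm α p x)

section Seminorms

variable {α : ℕ → ℝ}

lemma lamOneNorm_eq_tsum (p : ℕ) (x : ℕ → ℂ) : lamOneNorm α p x = ∑' n, lamOneTerm α p x n :=
  rfl

lemma lamOneTerm_nonneg (p : ℕ) (x : ℕ → ℂ) : 0 ≤ lamOneTerm α p x :=
  fun _ => mul_nonneg (norm_nonneg _) (Real.exp_pos _).le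

lemma lamOneNorm_nonneg (p : ℕ) (x : ℕ → ℂ) : 0 ≤ lamOneNorm α p x :=
  tsum_nonneg (lamOneTerm_nonneg p x)

lemma lamOneTerm_single (p i : ℕ) (c : ℂ) :
    lamOneTerm α p (Pi.single i c) = Pi.single i (‖c‖ * Real.exp (-(α (i + 1)) / (p : ℝ))) := by
  funext n
  rcases eq_or_ne n i with rfl | hn <;> simp [lamOneTerm, *]

lemma memLamOne_single (i : ℕ) (c : ℂ) : MemLamOne α (Pi.single i c) := fun p _ => by
  rw [lamOneTerm_single]
  exact (hasSum_pi_single _ _).summable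

lemma lamOneNorm_single_zero_one_le_one (h : 0 ≤ α 1) (p : ℕ) :
    lamOneNorm α p (Pi.single 0 1) ≤ 1 := by
  rw [lamOneNorm_eq_tsum, lamOneTerm_single, tsum_pi_single, norm_one, one_mul,
    Real.exp_le_one_iff, neg_div, neg_nonpos]
  positivity

lemma exp_neg_div_le_mul (hmono : Monotone α) (p : ℕ) {i m : ℕ} (him : i ≤ m) :
    Real.exp (-(α (m + 1)) / (p : ℝ)) ≤
      Real.exp (-(α (i + 1)) / ((2 * p : ℕ) : ℝ)) *
        Real.exp (-(α (m - i + 1)) / ((2 * p : ℕ) : ℝ)) := by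
  rw [← Real.exp_add, Real.exp_le_exp, ← add_div, neg_div, ← neg_add, neg_div, neg_le_neg_iff,
    Nat.cast_mul, Nat.cast_two, ← div_div]
  gcongr
  linarith [hmono (by omega : i + 1 ≤ m + 1), hmono (by omega : m - i + 1 ≤ m + 1)]

lemma lamOneTerm_conv_le (hmono : Monotone α) (p : ℕ) (a b : ℕ → ℂ) (m : ℕ) :
    lamOneTerm α p (conv a b) m ≤
      ∑ i ∈ Finset.range (m + 1), lamOneTerm α (2 * p) a i * lamOneTerm α (2 * p) b (m - i) := by
  calc lamOneTerm α p (conv a b) m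
      ≤ (∑ i ∈ Finset.range (m + 1), ‖a i‖ * ‖b (m - i)‖) * Real.exp (-(α (m + 1)) / (p : ℝ)) := by
        refine mul_le_mul_of_nonneg_right ((norm_sum_le _ _).trans_eq ?_) (Real.exp_pos _).le
        simp only [norm_mul]
    _ = ∑ i ∈ Finset.range (m + 1), ‖a i‖ * ‖b (m - i)‖ * Real.exp (-(α (m + 1)) / (p : ℝ)) :=
        Finset.sum_mul _ _ _
    _ ≤ _ := Finset.sum_le_sum fun i hi => by
        have him : i ≤ m := Nat.lt_succ_iff.mp (Finset.mem_range.mp hi)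
        calc _ ≤ ‖a i‖ * ‖b (m - i)‖ * (Real.exp (-(α (i + 1)) / ((2 * p : ℕ) : ℝ)) *
              Real.exp (-(α (m - i + 1)) / ((2 * p : ℕ) : ℝ))) := by
              gcongr
              exact exp_neg_div_le_mul hmono p him
          _ = _ := by simp only [lamOneTerm]; ring

lemma summable_lamOneTerm_conv (hmono : Monotone α) (p : ℕ) {a b : ℕ → ℂ}
    (ha : Summable (lamOneTerm α (2 * p) a)) (hb : Summable (lamOneTerm α (2 * p) b)) :
    Summable (lamOneTerm α p (conv a b)) :=
  (summable_sum_mul_range_of_summable_mul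
    (ha.mul_of_nonneg hb (lamOneTerm_nonneg _ _) (lamOneTerm_nonneg _ _))).of_nonneg_of_le
    (lamOneTerm_nonneg _ _) (lamOneTerm_conv_le hmono p a b)

lemma lamOneNorm_conv_le (hmono : Monotone α) (p : ℕ) {a b : ℕ → ℂ}
    (ha : Summable (lamOneTerm α (2 * p) a)) (hb : Summable (lamOneTerm α (2 * p) b)) :
    lamOneNorm α p (conv a b) ≤ lamOneNorm α (2 * p) a * lamOneNorm α (2 * p) b := by
  have hprod := ha.mul_of_nonneg hb (lamOneTerm_nonneg _ _) (lamOneTerm_nonneg _ _)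
  simp only [lamOneNorm_eq_tsum]
  rw [ha.tsum_mul_tsum_eq_tsum_sum_range hb hprod]
  exact (summable_lamOneTerm_conv hmono p ha hb).tsum_le_tsum (lamOneTerm_conv_le hmono p a b)
    (summable_sum_mul_range_of_summable_mul hprod)

lemma MemLamOne.conv (hmono : Monotone α) {a b : ℕ → ℂ} (ha : MemLamOne α a)
    (hb : MemLamOne α b) : MemLamOne α (conv a b) :=
  fun p hp => summable_lamOneTerm_conv hmono p (ha _ (by omega)) (hb _ (by omega))

end Seminorms

noncomputable def convPow (θ : ℕ → ℂ) (k : ℕ) : ℕ → ℂ :=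
  (That θ)^[k] (Pi.single 0 1)

lemma convPow_succ (θ : ℕ → ℂ) (k : ℕ) : convPow θ (k + 1) = conv θ (convPow θ k) :=
  Function.iterate_succ_apply' _ _ _

lemma iterate_That (θ x : ℕ → ℂ) (k : ℕ) : (That θ)^[k] x = conv (convPow θ k) x := by
  induction k with
  | zero => exact (single_zero_one_conv x).symm
  | succ k ih =>
    rw [Function.iterate_succ_apply', ih, convPow_succ]
    exact (conv_assoc _ _ _).symm

section PowerBounded

variable {α : ℕ → ℝ} {θ : ℕ → ℂ}

lemma memLamOne_convPow (hmono : Monotone α) (hθ : MemLamOne α θ) (k : ℕ) :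
    MemLamOne α (convPow θ k) := by
  induction k with
  | zero => exact memLamOne_single 0 1
  | succ k ih => rw [convPow_succ]; exact hθ.conv hmono ih

lemma lamOneNorm_convPow_le_one (hmono : Monotone α) (hα₁ : 0 ≤ α 1) (hθ : MemLamOne α θ)
    (hθ₁ : ∀ p : ℕ, 1 ≤ p → lamOneNorm α p θ ≤ 1) (k : ℕ) {p : ℕ} (hp : 1 ≤ p) :
    lamOneNorm α p (convPow θ k) ≤ 1 := by
  induction k generalizing p with
  | zero => exact lamOneNorm_single_zero_one_le_one hα₁ p
  | succ k ih =>
    have h2p : 1 ≤ 2 * p := by omega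
    rw [convPow_succ]
    calc lamOneNorm α p (conv θ (convPow θ k))
        ≤ lamOneNorm α (2 * p) θ * lamOneNorm α (2 * p) (convPow θ k) :=
          lamOneNorm_conv_le hmono p (hθ _ h2p) (memLamOne_convPow hmono hθ k _ h2p)
      _ ≤ 1 * 1 := mul_le_mul (hθ₁ _ h2p) (ih h2p) (lamOneNorm_nonneg _ _) zero_le_one
      _ = 1 := one_mul 1

end PowerBounded

theorem stmt_11_general (α : ℕ → ℝ) (hmono : Monotone α) (hnonneg : ∀ n, 0 ≤ α n)
    (θ : ℕ → ℂ)
    (hθ : ∀ p : ℕ, 1 ≤ p → Summable fun n : ℕ => ‖θ n‖ * Real.exp (-(α (n + 1)) / (p : ℝ))) :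
    (∀ p : ℕ, 1 ≤ p → ∃ q : ℕ, 1 ≤ q ∧ ∀ k : ℕ, ∀ x : ℕ → ℂ,
        (∀ r : ℕ, 1 ≤ r → Summable fun n : ℕ => ‖x n‖ * Real.exp (-(α (n + 1)) / (r : ℝ))) →
        lamOneNorm α p ((That θ)^[k] x) ≤ lamOneNorm α q x)
      ↔ ∀ p : ℕ, 1 ≤ p → lamOneNorm α p θ ≤ 1 := by
  constructor
  · intro hpb p hp
    obtain ⟨q, -, hq⟩ := hpb p hp
    calc lamOneNorm α p θ = lamOneNorm α p ((That θ)^[1] (Pi.single 0 1)) := by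
          rw [Function.iterate_one, That, conv_single_zero_one]
      _ ≤ lamOneNorm α q (Pi.single 0 1) := hq 1 _ (memLamOne_single 0 1)
      _ ≤ 1 := lamOneNorm_single_zero_one_le_one (hnonneg 1) q
  · intro hθ₁ p hp
    refine ⟨2 * p, by omega, fun k x hx => ?_⟩
    calc lamOneNorm α p ((That θ)^[k] x)
        ≤ lamOneNorm α (2 * p) (convPow θ k) * lamOneNorm α (2 * p) x := by
          rw [iterate_That]
          exact lamOneNorm_conv_le hmono p (memLamOne_convPow hmono hθ k _ (by omega))
            (hx _ (by omega))
      _ ≤ lamOneNorm α (2 * p) x :=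
          mul_le_of_le_one_left (lamOneNorm_nonneg _ _)
            (lamOneNorm_convPow_le_one hmono (hnonneg 1) hθ hθ₁ k (by omega))

/-- The convolution operator T̂_θ : Λ₁(α) → Λ₁(α) is power bounded iff
sup_p ‖θ‖_p ≤ 1. -/
theorem stmt_11 (α : ℕ → ℝ) (hmono : Monotone α) (hnonneg : ∀ n, 0 ≤ α n)
    (hα : Tendsto α atTop atTop) (θ : ℕ → ℂ)
    (hθ : ∀ p : ℕ, 1 ≤ p → Summable fun n : ℕ => ‖θ n‖ * Real.exp (-(α (n + 1)) / (p : ℝ))) :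
    (∀ p : ℕ, 1 ≤ p → ∃ q : ℕ, 1 ≤ q ∧ ∀ k : ℕ, ∀ x : ℕ → ℂ,
        (∀ r : ℕ, 1 ≤ r → Summable fun n : ℕ => ‖x n‖ * Real.exp (-(α (n + 1)) / (r : ℝ))) →
        lamOneNorm α p ((That θ)^[k] x) ≤ lamOneNorm α q x)
      ↔ ∀ p : ℕ, 1 ≤ p → lamOneNorm α p θ ≤ 1 :=
  stmt_11_general α hmono hnonneg θ hθ
end

section
/- Let (α_n) be nonnegative increasing with ∑_n e^{-m₁ α_n} < ∞ for some m₁ ∈ ℕ, and let β satisfy |β_{n-1}| ≤ C₀ e^{m₀ α_n} for all n. Then the dual convolution operator Ť_β e_n = ∑_{j=1}^n β_{n-j} e_j on Λ_∞(α) satisfies ‖Ť_β e_n‖_p ≤ C₀ D ‖e_n‖_{p+m₀+m₁} for every p, n ∈ ℕ, where D = ∑_j e^{-m₁ α_j}. Hence Ť_β : Λ_∞(α) → Λ_∞(α) is continuous. -/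
/-!
For `1 ≤ j ≤ n`, monotonicity of `α` bounds `‖β (n - j)‖` by `C₀ e^{m₀ α_n}` and
`e^{p α_j}` by `e^{(p + m₁) α_n} e^{-m₁ α_j}`; the remaining factors `e^{-m₁ α_j}`
sum to at most `D`.
-/

open Finset Real

lemma sum_Icc_one_le_tsum_succ {f : ℕ → ℝ} (hf : ∀ n, 0 ≤ f n)
    (hsum : Summable fun n => f (n + 1)) (n : ℕ) :
    ∑ j ∈ Icc 1 n, f j ≤ ∑' j, f (j + 1) := by
  have hshift : ∑ j ∈ Icc 1 n, f j = ∑ j ∈ range n, f (j + 1) := by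
    rw [← Ico_add_one_right_eq_Icc, sum_Ico_eq_sum_range]
    simp only [add_tsub_cancel_right, add_comm]
  rw [hshift]
  exact hsum.sum_le_tsum _ fun j _ => hf (j + 1)

lemma norm_le_of_lt_of_monotone {E : Type*} [Norm E] {α : ℕ → ℝ} (hmono : Monotone α)
    {β : ℕ → E} {m₀ C₀ : ℝ} (hm₀ : 0 ≤ m₀) (hC₀ : 0 ≤ C₀)
    (hβ : ∀ n : ℕ, 1 ≤ n → ‖β (n - 1)‖ ≤ C₀ * exp (m₀ * α n)) {k n : ℕ} (hkn : k < n) :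
    ‖β k‖ ≤ C₀ * exp (m₀ * α n) :=
  calc ‖β k‖ ≤ C₀ * exp (m₀ * α (k + 1)) := by simpa using hβ (k + 1) le_add_self
    _ ≤ C₀ * exp (m₀ * α n) := by gcongr; exact hmono hkn

lemma exp_mul_le_exp_mul_mul_exp_neg {α : ℕ → ℝ} (hmono : Monotone α) {p m : ℝ}
    (hp : 0 ≤ p) (hm : 0 ≤ m) {j n : ℕ} (hjn : j ≤ n) :
    exp (p * α j) ≤ exp ((p + m) * α n) * exp (-m * α j) := by
  rw [← exp_add]
  have hα := hmono hjn
  gcongr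
  nlinarith

theorem stmt_14_general (α : ℕ → ℝ) (hmono : Monotone α)
    (m₁ : ℕ) (hsum : Summable fun n : ℕ => Real.exp (-(m₁ : ℝ) * α (n + 1)))
    (β : ℕ → ℂ) (m₀ : ℕ) (C₀ : ℝ) (hC₀ : 0 < C₀)
    (hβ : ∀ n : ℕ, 1 ≤ n → ‖β (n - 1)‖ ≤ C₀ * Real.exp ((m₀ : ℝ) * α n)) :
    ∀ p n : ℕ, 1 ≤ n →
      ∑ j ∈ Finset.Icc 1 n, ‖β (n - j)‖ * Real.exp ((p : ℝ) * α j)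
        ≤ C₀ * (∑' j : ℕ, Real.exp (-(m₁ : ℝ) * α (j + 1)))
            * Real.exp (((p : ℝ) + (m₀ : ℝ) + (m₁ : ℝ)) * α n) := by
  intro p n _
  calc ∑ j ∈ Icc 1 n, ‖β (n - j)‖ * exp (p * α j)
      ≤ ∑ j ∈ Icc 1 n, C₀ * exp (m₀ * α n) * (exp ((p + m₁) * α n) * exp (-m₁ * α j)) := by
        refine sum_le_sum fun j hj => mul_le_mul ?_ ?_ (exp_pos _).le (by positivity)
        · exact norm_le_of_lt_of_monotone hmono m₀.cast_nonneg hC₀.le hβ (by grind)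
        · exact exp_mul_le_exp_mul_mul_exp_neg hmono p.cast_nonneg m₁.cast_nonneg
            (mem_Icc.1 hj).2
    _ = C₀ * exp ((p + m₀ + m₁) * α n) * ∑ j ∈ Icc 1 n, exp (-m₁ * α j) := by
        rw [mul_sum, show ((p : ℝ) + m₀ + m₁) * α n = m₀ * α n + (p + m₁) * α n by ring, exp_add]
        simp only [mul_assoc]
    _ ≤ C₀ * exp ((p + m₀ + m₁) * α n) * ∑' j, exp (-m₁ * α (j + 1)) := by
        gcongr
        exact sum_Icc_one_le_tsum_succ (f := fun j => exp (-m₁ * α j))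
          (fun _ => (exp_pos _).le) hsum n
    _ = C₀ * (∑' j, exp (-m₁ * α (j + 1))) * exp ((p + m₀ + m₁) * α n) := by ring

/-- For α nonnegative increasing with ∑ e^{-m₁ α_n} < ∞ and |β_{n-1}| ≤ C₀ e^{m₀ α_n},
the dual convolution operator on Λ_∞(α) satisfies
‖Ť_β e_n‖_p ≤ C₀ D ‖e_n‖_{p+m₀+m₁} with D = ∑_j e^{-m₁ α_j};
hence Ť_β : Λ_∞(α) → Λ_∞(α) is continuous. -/
theorem stmt_14 (α : ℕ → ℝ) (hmono : Monotone α) (hnonneg : ∀ n, 0 ≤ α n)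
    (m₁ : ℕ) (hsum : Summable fun n : ℕ => Real.exp (-(m₁ : ℝ) * α (n + 1)))
    (β : ℕ → ℂ) (m₀ : ℕ) (C₀ : ℝ) (hC₀ : 0 < C₀)
    (hβ : ∀ n : ℕ, 1 ≤ n → ‖β (n - 1)‖ ≤ C₀ * Real.exp ((m₀ : ℝ) * α n)) :
    ∀ p n : ℕ, 1 ≤ n →
      ∑ j ∈ Finset.Icc 1 n, ‖β (n - j)‖ * Real.exp ((p : ℝ) * α j)
        ≤ C₀ * (∑' j : ℕ, Real.exp (-(m₁ : ℝ) * α (j + 1)))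
            * Real.exp (((p : ℝ) + (m₀ : ℝ) + (m₁ : ℝ)) * α n) :=
  stmt_14_general α hmono m₁ hsum β m₀ C₀ hC₀ hβ
end

section
/- Let θ ∈ Λ_1(n) (exponent sequence α_n = n). The convolution operator T̂_θ e_n = ∑_{j≥n} θ_{j-n} e_j satisfies ‖T̂_θ e_n‖_p ≤ e^{1/(2p)} ‖θ‖_{2p} ‖e_n‖_p for every p, n ∈ ℕ, where ‖x‖_p = ∑_j |x_j| e^{-j/p}; hence T̂_θ is strongly tame on Λ_1(n). -/
open Real

theorem exp_neg_add_div_le (x y p : ℝ) (hx : 0 ≤ x) (hp : 0 ≤ p) :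
    exp (-(x + y) / p) ≤ (exp (1 / (2 * p)) * exp (-y / p)) * exp (-(x + 1) / (2 * p)) := by
  rw [← exp_add, ← exp_add, exp_le_exp]
  have hhalf : x / p / 2 ≤ x / p := half_le_self (div_nonneg hx hp)
  have hlhs : -(x + y) / p = -(x / p) - y / p := by ring
  have hrhs : 1 / (2 * p) + -y / p + -(x + 1) / (2 * p) = -(x / p / 2) - y / p := by ring
  rw [hlhs, hrhs]
  linarith

theorem tsum_le_mul_tsum_of_le_mul {ι : Type*} {f g : ι → ℝ} {C : ℝ} (hf : ∀ i, 0 ≤ f i)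
    (hfg : ∀ i, f i ≤ C * g i) (hg : Summable g) : ∑' i, f i ≤ C * ∑' i, g i := by
  rw [← tsum_mul_left]
  exact (Summable.of_nonneg_of_le hf hfg (hg.mul_left C)).tsum_le_tsum hfg (hg.mul_left C)

/-- For θ ∈ Λ₁(n) (α_n = n), the convolution operator satisfies
‖T̂_θ e_n‖_p = ∑_{j≥n} |θ_{j-n}| e^{-j/p} ≤ e^{1/(2p)} ‖θ‖_{2p} ‖e_n‖_p;
hence T̂_θ is strongly tame on Λ₁(n). -/
theorem stmt_18 (θ : ℕ → ℂ)
    (hθ : ∀ p : ℕ, 1 ≤ p →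
      Summable fun i : ℕ => ‖θ i‖ * Real.exp (-((i : ℝ) + 1) / (p : ℝ))) :
    ∀ p n : ℕ, 1 ≤ p → 1 ≤ n →
      ∑' i : ℕ, ‖θ i‖ * Real.exp (-((i : ℝ) + (n : ℝ)) / (p : ℝ))
        ≤ Real.exp (1 / (2 * (p : ℝ)))
            * (∑' i : ℕ, ‖θ i‖ * Real.exp (-((i : ℝ) + 1) / (2 * (p : ℝ))))
            * Real.exp (-(n : ℝ) / (p : ℝ)) := by
  intro p n hp _
  have hsum : Summable fun i : ℕ => ‖θ i‖ * exp (-((i : ℝ) + 1) / (2 * (p : ℝ))) := by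
    simpa only [Nat.cast_mul, Nat.cast_ofNat] using hθ (2 * p) (by omega)
  rw [mul_right_comm]
  refine tsum_le_mul_tsum_of_le_mul (fun i => by positivity) (fun i => ?_) hsum
  rw [mul_left_comm]
  exact mul_le_mul_of_nonneg_left
    (exp_neg_add_div_le _ _ _ i.cast_nonneg p.cast_nonneg) (norm_nonneg _)
end
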